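/- arXiv:2002.12136 — 9 statements merged into one kernel-verified Lean document; each statement's English description precedes it below -/
import Mathlib

section
/- For the Lucas sequence u_n(A,B) and any natural numbers k, n, r, the identity u_{kn+r}(A,B) = \sum_{j=0}^{n} C(n,j) * (u_{k+1}(A,B) - A*u_k(A,B))^{n-j} * u_k(A,B)^j * u_{j+r}(A,B) holds. -/
def lucasU (A B : ℤ) : ℕ → ℤ
  | 0 => 0
  | 1 => 1
  | (n+2) => A * lucasU A B (n+1) - B * lucasU A B n

/-! If `x` is a root of `X² - A X + B` in any ring, then `x ^ m = (u_{m+1} - A u_m) + u_m x`.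
Writing `x ^ (k n + r) = (x ^ k) ^ n * x ^ r` and expanding `(x ^ k) ^ n` by the binomial theorem
expresses `x ^ (k n + r)` through the powers `x ^ (j + r)`. For the companion matrix of
`X² - A X + B` the entry `(1, 0)` of `x ^ m` is `u_m`, and reading off that entry gives the
identity. -/

namespace lucasU

variable {R : Type*} [Ring R] {A B : ℤ}

theorem pow_eq_of_sq_eq {x : R} (hx : x ^ 2 = A • x - B • 1) (m : ℕ) :
    x ^ m = (lucasU A B (m + 1) - A * lucasU A B m) • 1 + lucasU A B m • x := by
  induction m with
  | zero => simp [lucasU]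
  | succ m ih =>
    have hstep : lucasU A B (m + 2) - A * lucasU A B (m + 1) = -B * lucasU A B m := by
      rw [lucasU]; ring
    rw [pow_succ, ih, hstep, add_mul, smul_mul_assoc, smul_mul_assoc, one_mul, ← sq, hx]
    module

theorem pow_mul_add_eq_sum {x : R} (hx : x ^ 2 = A • x - B • 1) (k n r : ℕ) :
    x ^ (k * n + r) = ∑ j ∈ Finset.range (n + 1),
      ((n.choose j : ℤ) * (lucasU A B (k + 1) - A * lucasU A B k) ^ (n - j) *
        lucasU A B k ^ j) • x ^ (j + r) := by
  have hcomm : Commute (lucasU A B k • x) ((lucasU A B (k + 1) - A * lucasU A B k) • (1 : R)) :=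
    ((Commute.one_right x).smul_left _).smul_right _
  rw [pow_add, pow_mul, pow_eq_of_sq_eq hx, add_comm, hcomm.add_pow, Finset.sum_mul]
  refine Finset.sum_congr rfl fun j _ => ?_
  rw [smul_pow, smul_pow, one_pow, ← Int.cast_natCast, ← zsmul_one]
  simp only [smul_mul_assoc, mul_smul_comm, mul_one, smul_smul, ← pow_add]
  congr 1
  ring

def companion (A B : ℤ) : Matrix (Fin 2) (Fin 2) ℤ := !![A, -B; 1, 0]

theorem companion_sq (A B : ℤ) : companion A B ^ 2 = A • companion A B - B • 1 := by
  rw [companion, sq, Matrix.one_fin_two, Matrix.mul_fin_two]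
  ext i j
  fin_cases i <;> fin_cases j <;> simp [sub_eq_add_neg]

theorem companion_pow_apply_one_zero (A B : ℤ) (m : ℕ) :
    (companion A B ^ m) 1 0 = lucasU A B m := by
  rw [pow_eq_of_sq_eq (companion_sq A B), Matrix.add_apply, Matrix.smul_apply, Matrix.smul_apply]
  simp [companion]

end lucasU

theorem stmt_0 (A B : ℤ) (k n r : ℕ) :
    lucasU A B (k*n + r) =
      ∑ j ∈ Finset.range (n+1),
        (n.choose j : ℤ) * (lucasU A B (k+1) - A * lucasU A B k)^(n-j) *
          (lucasU A B k)^j * lucasU A B (j+r) := by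
  have h := congrArg (· 1 0) (lucasU.pow_mul_add_eq_sum (lucasU.companion_sq A B) k n r)
  simpa only [Matrix.sum_apply, Matrix.smul_apply, lucasU.companion_pow_apply_one_zero,
    smul_eq_mul] using h
end

section
/- Let A, B, M be integers with M \ne 0. Then B is relatively prime to M if and only if there exists a positive integer n such that u_n(A,B) \equiv 0 (mod M) and u_{n+1}(A,B) \equiv 1 (mod M). -/
theorem lucasU_add_two (A B : ℤ) (n : ℕ) :
    lucasU A B (n + 2) = A * lucasU A B (n + 1) - B * lucasU A B n := rfl

section CommRing

variable {R : Type*} [CommRing R]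

def lucasStep (a : R) (b : Rˣ) : Equiv.Perm (R × R) where
  toFun q := (q.2, a * q.2 - b * q.1)
  invFun q := (↑b⁻¹ * (a * q.1 - q.2), q.1)
  left_inv q := by
    ext
    · simp only [sub_sub_cancel, Units.inv_mul_cancel_left]
    · rfl
  right_inv q := by
    ext
    · rfl
    · simp only [Units.mul_inv_cancel_left, sub_sub_cancel]

theorem lucasStep_iterate_zero_one (A B : ℤ) (b : Rˣ) (hb : (b : R) = B) (n : ℕ) :
    (lucasStep (A : R) b)^[n] (0, 1) = ((lucasU A B n : R), (lucasU A B (n + 1) : R)) := by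
  induction n with
  | zero => simp [lucasU]
  | succ n ih =>
    rw [Function.iterate_succ_apply', ih, lucasU_add_two]
    simp [lucasStep, hb]

theorem isUnit_of_lucasU_eq_zero_of_lucasU_succ_eq_one (A B : ℤ) (n : ℕ)
    (h0 : (lucasU A B (n + 1) : R) = 0) (h1 : (lucasU A B (n + 2) : R) = 1) :
    IsUnit (B : R) := by
  refine IsUnit.of_mul_eq_one (-(lucasU A B n : R)) ?_
  rw [lucasU_add_two, Int.cast_sub, Int.cast_mul, h0, mul_zero, zero_sub] at h1
  simpa using h1

theorem exists_lucasU_eq_zero_and_succ_eq_one_of_isUnit [Finite R] (A B : ℤ)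
    (hB : IsUnit (B : R)) :
    ∃ n, 0 < n ∧ (lucasU A B n : R) = 0 ∧ (lucasU A B (n + 1) : R) = 1 := by
  set σ := lucasStep (A : R) hB.unit
  have hperiod := lucasStep_iterate_zero_one A B hB.unit hB.unit_spec (orderOf σ)
  rw [Equiv.Perm.iterate_eq_pow, pow_orderOf_eq_one, Equiv.Perm.one_apply] at hperiod
  obtain ⟨h0, h1⟩ := Prod.mk.inj hperiod
  exact ⟨orderOf σ, orderOf_pos σ, h0.symm, h1.symm⟩

theorem isUnit_iff_exists_lucasU_eq_zero_and_succ_eq_one [Finite R] (A B : ℤ) :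
    IsUnit (B : R) ↔ ∃ n, 0 < n ∧ (lucasU A B n : R) = 0 ∧ (lucasU A B (n + 1) : R) = 1 := by
  refine ⟨exists_lucasU_eq_zero_and_succ_eq_one_of_isUnit A B, ?_⟩
  rintro ⟨_ | n, hn, h0, h1⟩
  · exact (Nat.lt_irrefl 0 hn).elim
  · exact isUnit_of_lucasU_eq_zero_of_lucasU_succ_eq_one A B n h0 h1

end CommRing

theorem stmt_1 (A B M : ℤ) (hM : M ≠ 0) :
    IsCoprime B M ↔ ∃ n : ℕ, 0 < n ∧ lucasU A B n ≡ 0 [ZMOD M] ∧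
      lucasU A B (n+1) ≡ 1 [ZMOD M] := by
  have : NeZero M.natAbs := ⟨Int.natAbs_ne_zero.mpr hM⟩
  have hmodEq (a b : ℤ) : a ≡ b [ZMOD M] ↔ (a : ZMod M.natAbs) = b :=
    (ZMod.intCast_eq_intCast_iff a b _).trans Int.modEq_natAbs |>.symm
  have hcoprime : IsCoprime B M ↔ IsUnit (B : ZMod M.natAbs) := by
    rw [ZMod.coe_int_isUnit_iff_isCoprime, Int.natCast_natAbs, IsCoprime.abs_left_iff,
      isCoprime_comm]
  simp only [hcoprime, hmodEq, Int.cast_zero, Int.cast_one]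
  exact isUnit_iff_exists_lucasU_eq_zero_and_succ_eq_one A B
end

section
/- Let A be an integer with A \ge 2. Then natural numbers x, y with x \ge y satisfy x^2 - A*x*y + y^2 = 1 if and only if there exists a natural number n with x = u_{n+1}(A,1) and y = u_n(A,1). -/
namespace lucasU

variable (A B : ℤ)

@[simp] lemma zero : lucasU A B 0 = 0 := rfl

@[simp] lemma one : lucasU A B 1 = 1 := rfl

lemma succ_succ (n : ℕ) :
    lucasU A B (n + 2) = A * lucasU A B (n + 1) - B * lucasU A B n := rfl

lemma sq_sub_mul_add_mul_sq (n : ℕ) :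
    lucasU A B (n + 1) ^ 2 - A * lucasU A B (n + 1) * lucasU A B n
      + B * lucasU A B n ^ 2 = B ^ n := by
  induction n with
  | zero => simp
  | succ n ih =>
    rw [succ_succ, pow_succ]
    linear_combination B * ih

end lucasU

lemma vieta_jump_bounds {A x y : ℤ} (hy : 0 < y) (hxy : y ≤ x)
    (h : x ^ 2 - A * x * y + y ^ 2 = 1) : 0 ≤ A * y - x ∧ A * y - x < y := by
  have hprod : x * (A * y - x) = y ^ 2 - 1 := by linear_combination -h
  have hx : 0 < x := hy.trans_le hxy
  constructor
  · nlinarith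
  · nlinarith

theorem exists_lucasU_of_sq_sub_mul_add_sq_eq_one {A x y : ℤ} (hy : 0 ≤ y) (hxy : y ≤ x)
    (h : x ^ 2 - A * x * y + y ^ 2 = 1) :
    ∃ n : ℕ, x = lucasU A 1 (n + 1) ∧ y = lucasU A 1 n := by
  rcases hy.eq_or_lt with rfl | hy
  · exact ⟨0, by show x = 1; nlinarith, rfl⟩
  · obtain ⟨hz, hzy⟩ := vieta_jump_bounds hy hxy h
    obtain ⟨n, hyn, hzn⟩ :=
      exists_lucasU_of_sq_sub_mul_add_sq_eq_one (A := A) hz hzy.le (by linear_combination h)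
    refine ⟨n + 1, ?_, hyn⟩
    rw [lucasU.succ_succ, ← hyn, ← hzn]
    ring
termination_by y.toNat
decreasing_by omega

theorem stmt_3_general (A : ℤ) (x y : ℤ) (hy : 0 ≤ y) (hxy : y ≤ x) :
    x^2 - A*x*y + y^2 = 1 ↔ ∃ n : ℕ, x = lucasU A 1 (n+1) ∧ y = lucasU A 1 n := by
  refine ⟨exists_lucasU_of_sq_sub_mul_add_sq_eq_one hy hxy, ?_⟩
  rintro ⟨n, rfl, rfl⟩
  simpa using lucasU.sq_sub_mul_add_mul_sq A 1 n

theorem stmt_3 (A : ℤ) (hA : 2 ≤ A) (x y : ℤ) (hy : 0 ≤ y) (hxy : y ≤ x) :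
    x^2 - A*x*y + y^2 = 1 ↔ ∃ n : ℕ, x = lucasU A 1 (n+1) ∧ y = lucasU A 1 n :=
  stmt_3_general A x y hy hxy
end

section
/- If x and y are Gaussian integers (elements of Z[i]) satisfying x^2 - 4*x*y + y^2 = 1, then both x and y are rational integers (i.e., their imaginary parts are zero). -/
/-!
Put `x' = 4y - x`, the other root of `t ^ 2 - 4 y t + y ^ 2 - 1` (Vieta jumping), so that
`x x' = y ^ 2 - 1`. When the norm `n` of `y` is positive and at most that of `x`, the norm of `x'` is
smaller than that of `x`: otherwise both are at least `n` and add up to at least `8 n` by the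
parallelogram law, so their product is at least `7 n ^ 2 > (n + 1) ^ 2 ≥ N(y ^ 2 - 1)`.
Descending on `N x + N y` ends at a solution with `y = 0`, where `x ^ 2 = 1` forces `x = ±1`.
-/

namespace Zsqrtd

variable {d : ℤ}

theorem norm_add_add_norm_sub (a b : ℤ√d) :
    (a + b).norm + (a - b).norm = 2 * a.norm + 2 * b.norm := by
  simp only [norm_def, re_add, im_add, re_sub, im_sub]
  ring

theorem norm_sq_sub_one_le (z : ℤ√d) : (z ^ 2 - 1).norm ≤ (z.norm + 1) ^ 2 := by
  simp only [norm_def, sq, re_sub, im_sub, re_mul, im_mul, re_one, im_one]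
  nlinarith [sq_nonneg z.re]

theorem im_eq_zero_of_sq_eq_one (hd : d < 0) {x : ℤ√d} (h : x ^ 2 = 1) : x.im = 0 := by
  have hre : x.re * x.re + d * x.im * x.im = 1 := by simpa [sq] using congrArg re h
  have him : x.re * x.im + x.im * x.re = 0 := by simpa [sq] using congrArg im h
  rcases mul_eq_zero.mp (show x.re * x.im = 0 by linarith) with hx | hx
  · rw [hx] at hre
    nlinarith [sq_nonneg x.im]
  · exact hx

theorem norm_four_mul_sub_lt (hd : d ≤ 0) {x y : ℤ√d} (h : x ^ 2 - 4 * x * y + y ^ 2 = 1)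
    (hy : 1 ≤ y.norm) (hyx : y.norm ≤ x.norm) : (4 * y - x).norm < x.norm := by
  have hprod : x.norm * (4 * y - x).norm = (y ^ 2 - 1).norm := by
    rw [← norm_mul]
    congr 1
    linear_combination -h
  have hsum : 8 * y.norm ≤ x.norm + (4 * y - x).norm := by
    have hpar := norm_add_add_norm_sub (2 * y) (x - 2 * y)
    rw [show 2 * y + (x - 2 * y) = x by ring, show 2 * y - (x - 2 * y) = 4 * y - x by ring,
      norm_mul] at hpar
    have h2 : (2 : ℤ√d).norm = 4 := by norm_num [norm_def]
    nlinarith [norm_nonneg hd (x - 2 * y)]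
  have hbound := norm_sq_sub_one_le y
  by_contra! hle
  nlinarith [mul_nonneg (sub_nonneg.mpr hyx) (sub_nonneg.mpr (hyx.trans hle))]

theorem im_eq_zero_of_sq_sub_four_mul_add_sq_eq_one (hd : d < 0) {x y : ℤ√d}
    (h : x ^ 2 - 4 * x * y + y ^ 2 = 1) : x.im = 0 ∧ y.im = 0 := by
  induction hn : (x.norm + y.norm).toNat using Nat.strong_induction_on generalizing x y with
  | _ n ih =>
    wlog hyx : y.norm ≤ x.norm generalizing x y
    · exact (this (by linear_combination h) (by rwa [add_comm]) (le_of_not_ge hyx)).symm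
    rcases eq_or_ne y 0 with rfl | hy0
    · exact ⟨im_eq_zero_of_sq_eq_one hd (by simpa using h), rfl⟩
    have hy : 1 ≤ y.norm := by
      have := norm_nonneg hd.le y
      have := (norm_eq_zero_iff hd y).not.mpr hy0
      omega
    have hlt := norm_four_mul_sub_lt hd.le h hy hyx
    obtain ⟨hx', hy'⟩ := ih _ (by have := norm_nonneg hd.le (4 * y - x); omega)
      (x := 4 * y - x) (y := y) (by linear_combination h) rfl
    refine ⟨?_, hy'⟩
    simpa [hy'] using hx'

end Zsqrtd

theorem stmt_4 (x y : GaussianInt) (h : x^2 - 4*x*y + y^2 = 1) :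
    x.im = 0 ∧ y.im = 0 :=
  Zsqrtd.im_eq_zero_of_sq_sub_four_mul_add_sq_eq_one (by norm_num) h
end

section
/- A Gaussian integer z is a rational integer if and only if there exist Gaussian integers v, w, x, y with v \ne 0 such that (4*(2*v*(2*(2z+1)^2+1) - y)^2 - 3*y^2 - 1)^2 + 2*(w^2 - 1 - 3*y^2*(2z+1 - x*y)^2)^2 = 0. -/
/-!
Write `m = 2z + 1` and `D = 2m² + 1`. Since `-2` is not a square in `ℚ(i)`, the equation says
exactly that `(2(2vD - y), y)` and `(w, y(m - xy))` solve the Pell equation `X² - 3Y² = 1`, and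
every solution of this equation in `ℤ[i]` is a solution in `ℤ`. So `g = vD` is a nonzero integer
with `N(D) ≤ g² ≤ y²`, while `y ∣ Im m = 2 Im z`; as `(8 Im z)² ≤ N(D)`, this forces `Im z = 0`.

Conversely, for `z ∈ ℤ` powers of the unit `2 + √3` of `ℤ[√3]` supply both solutions: a power
congruent to `2 + √3` modulo `4D` gives the first one, and raising it to an odd power `2j + 1`
with `j ≡ z (mod y)` gives the second, because the `√3`-coordinate of `(X + y√3)^(2j+1)` is
`≡ (2j + 1) X^(2j) y ≡ m y (mod y²)`.
-/

namespace Zsqrtd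

variable {d : ℤ}

theorem exists_pow_sub_one_dvd {u : ℤ√d} (hu : IsUnit u) {M : ℤ} (hM : M ≠ 0) :
    ∃ T : ℕ, 0 < T ∧ (M : ℤ√d) ∣ u ^ T - 1 := by
  have : NeZero M.natAbs := ⟨Int.natAbs_ne_zero.2 hM⟩
  obtain ⟨j, k, hne, hjk⟩ := Finite.exists_ne_map_eq_of_infinite
    fun n : ℕ => (((u ^ n).re : ZMod M.natAbs), ((u ^ n).im : ZMod M.natAbs))
  wlog hkj : k < j generalizing j k
  · exact this k j hne.symm hjk.symm (by omega)
  simp only [Prod.mk.injEq, ZMod.intCast_eq_intCast_iff_dvd_sub, Int.natCast_natAbs,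
    abs_dvd] at hjk
  have hdvd : (M : ℤ√d) ∣ u ^ k * (u ^ (j - k) - 1) := by
    rw [mul_sub, ← pow_add, Nat.add_sub_cancel' hkj.le, mul_one, intCast_dvd]
    simpa [dvd_sub_comm] using hjk
  exact ⟨j - k, by omega, (hu.pow k).dvd_mul_left.1 hdvd⟩

theorem norm_pow_eq_one {u : ℤ√d} (hu : u.norm = 1) (n : ℕ) : (u ^ n).norm = 1 :=
  norm_eq_one_iff_mem_unitary.2 (pow_mem (norm_eq_one_iff_mem_unitary.1 hu) n)

theorem sq_re_sub_mul_sq_im_of_norm_eq_one {u : ℤ√d} (hu : u.norm = 1) :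
    u.re ^ 2 - d * u.im ^ 2 = 1 := by
  rw [norm_def] at hu
  linear_combination hu

theorem exists_im_pow_eq (X Y : ℤ) (k : ℕ) :
    ∃ c : ℤ, ((⟨X, Y⟩ : ℤ√d) ^ k).im = k * X ^ (k - 1) * Y + Y ^ 2 * c := by
  obtain ⟨c, hc⟩ :=
    (Polynomial.X ^ k : Polynomial (ℤ√d)).binomExpansion (X : ℤ√d) ((Y : ℤ√d) * sqrtd)
  have hXY : (⟨X, Y⟩ : ℤ√d) = (X : ℤ√d) + (Y : ℤ√d) * sqrtd := by ext <;> simp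
  simp only [Polynomial.eval_pow, Polynomial.eval_X, Polynomial.derivative_X_pow,
    Polynomial.eval_mul, Polynomial.eval_C, ← Int.cast_pow] at hc
  refine ⟨d * c.im, ?_⟩
  rw [hXY, hc]
  simp only [im_add, im_mul, re_mul, re_intCast, im_intCast, re_natCast, im_natCast, re_sqrtd,
    im_sqrtd, pow_two]
  ring

end Zsqrtd

open Zsqrtd

def twoAddSqrtThree : ℤ√3 := ⟨2, 1⟩

theorem norm_twoAddSqrtThree_pow (n : ℕ) : (twoAddSqrtThree ^ n).norm = 1 :=
  norm_pow_eq_one rfl n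

theorem isUnit_twoAddSqrtThree : IsUnit twoAddSqrtThree := by
  simpa using (isUnit_iff_norm_isUnit _).2 (norm_twoAddSqrtThree_pow 1 ▸ isUnit_one)

theorem re_pos_and_le_im_twoAddSqrtThree_pow (n : ℕ) :
    0 < (twoAddSqrtThree ^ n).re ∧ (n : ℤ) ≤ (twoAddSqrtThree ^ n).im := by
  induction n with
  | zero => simp
  | succ n ih =>
    rw [pow_succ, re_mul, im_mul]
    simp only [twoAddSqrtThree] at ih ⊢
    push_cast
    constructor <;> linarith

theorem exists_pell_three_two_mul_sub (D : ℤ) (hD : D ≠ 0) :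
    ∃ v y : ℤ, v ≠ 0 ∧ y ≠ 0 ∧ (2 * (2 * v * D - y)) ^ 2 - 3 * y ^ 2 = 1 := by
  obtain ⟨T, hT, hdvd⟩ := exists_pow_sub_one_dvd isUnit_twoAddSqrtThree (M := 4 * D) (by omega)
  have hY := (re_pos_and_le_im_twoAddSqrtThree_pow (T + 1)).2
  push_cast at hY
  set u := twoAddSqrtThree ^ (T + 1)
  have hpell := sq_re_sub_mul_sq_im_of_norm_eq_one (norm_twoAddSqrtThree_pow (T + 1))
  have hu : u - twoAddSqrtThree = (twoAddSqrtThree ^ T - 1) * twoAddSqrtThree := by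
    simp only [u]; ring
  have hmod := (intCast_dvd _ _).1 (hu ▸ dvd_mul_of_dvd_left hdvd twoAddSqrtThree)
  simp only [re_sub, im_sub, twoAddSqrtThree] at hmod
  obtain ⟨v, hv⟩ : 4 * D ∣ 2 * u.im - u.re := by
    have h := dvd_sub (hmod.2.mul_left 2) hmod.1
    rwa [show 2 * (u.im - 1) - (u.re - 2) = 2 * u.im - u.re by ring] at h
  refine ⟨v, u.im, ?_, by omega, ?_⟩
  · rintro rfl
    nlinarith
  · linear_combination hpell - (4 * v * D - 2 * u.im - u.re) * hv

theorem exists_pell_three_mul_sub_mul (z : ℤ) {X y : ℤ} (hy : y ≠ 0)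
    (h : X ^ 2 - 3 * y ^ 2 = 1) : ∃ w x : ℤ, w ^ 2 - 3 * (y * (2 * z + 1 - x * y)) ^ 2 = 1 := by
  set j := (z % y).toNat
  have hj : (j : ℤ) ≡ z [ZMOD y] := by
    rw [Int.toNat_of_nonneg (Int.emod_nonneg z hy)]
    exact Int.mod_modEq z y
  have hX : X ^ 2 ≡ 1 [ZMOD y] := Int.modEq_iff_dvd.2 ⟨-3 * y, by linear_combination -h⟩
  have hq : (2 * j + 1 : ℤ) * X ^ (2 * j) ≡ 2 * z + 1 [ZMOD y] := calc
    (2 * j + 1 : ℤ) * X ^ (2 * j) = (2 * j + 1) * (X ^ 2) ^ j := by ring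
    _ ≡ (2 * z + 1) * 1 ^ j [ZMOD y] := ((hj.mul_left 2).add_right 1).mul (hX.pow j)
    _ = 2 * z + 1 := by ring
  obtain ⟨t, ht⟩ := hq.dvd
  set u : ℤ√3 := ⟨X, y⟩ ^ (2 * j + 1)
  obtain ⟨c, hc⟩ := exists_im_pow_eq (d := 3) X y (2 * j + 1)
  push_cast at hc
  have hpell := sq_re_sub_mul_sq_im_of_norm_eq_one
    (norm_pow_eq_one (u := (⟨X, y⟩ : ℤ√3)) (by rw [norm_def]; linear_combination h) (2 * j + 1))
  refine ⟨u.re, t - c, ?_⟩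
  linear_combination hpell + 3 * (u.im + y * (2 * z + 1 - (t - c) * y)) * (hc - y * ht)

theorem exists_int_pell_pair (z : ℤ) :
    ∃ v w x y : ℤ, v ≠ 0 ∧ (2 * (2 * v * (2 * (2 * z + 1) ^ 2 + 1) - y)) ^ 2 - 3 * y ^ 2 = 1 ∧
      w ^ 2 - 3 * (y * (2 * z + 1 - x * y)) ^ 2 = 1 := by
  obtain ⟨v, y, hv, hy, h₁⟩ :=
    exists_pell_three_two_mul_sub (2 * (2 * z + 1) ^ 2 + 1) (by positivity)
  obtain ⟨w, x, h₂⟩ := exists_pell_three_mul_sub_mul z hy h₁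
  exact ⟨v, w, x, y, hv, h₁, h₂⟩

theorem sq_le_sq_of_pell_three {g y : ℤ} (h : (4 * g - 2 * y) ^ 2 - 3 * y ^ 2 = 1) :
    g ^ 2 ≤ y ^ 2 := by
  have hy : y ≠ 0 := by
    rintro rfl
    have : 16 * g ^ 2 = 1 := by linear_combination h
    omega
  have hy1 : 1 ≤ y ^ 2 := by
    have := Int.one_le_abs hy
    nlinarith [sq_abs y]
  nlinarith [sq_nonneg (4 * g - 4 * y)]

instance : Nonsquare 3 :=
  ⟨fun n h => by
    have : n < 2 := by nlinarith
    interval_cases n <;> omega⟩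

namespace GaussianInt

theorem sq_ne_neg_two (t : GaussianInt) : t ^ 2 ≠ -2 := by
  intro h
  have hre := congrArg Zsqrtd.re h
  have him := congrArg Zsqrtd.im h
  simp only [pow_two, re_mul, im_mul, re_neg, im_neg, re_ofNat, im_ofNat, Nat.cast_ofNat]
    at hre him
  rcases mul_eq_zero.1 (show t.re * t.im = 0 by linarith) with h0 | h0
  · have h1 : t.im ^ 2 = 2 := by rw [h0] at hre; linarith
    have : t.im.natAbs ^ 2 = 2 := by zify; rwa [sq_abs]
    have : t.im.natAbs < 2 := by nlinarith
    interval_cases t.im.natAbs <;> omega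
  · rw [h0] at hre
    nlinarith [sq_nonneg t.re]

theorem sq_add_two_mul_sq_eq_zero_iff {A B : GaussianInt} :
    A ^ 2 + 2 * B ^ 2 = 0 ↔ A = 0 ∧ B = 0 := by
  refine ⟨fun h => ?_, by rintro ⟨rfl, rfl⟩; ring⟩
  by_cases hB : B = 0
  · subst hB
    simpa using h
  · obtain ⟨t, rfl⟩ : B ∣ A :=
      (IsIntegrallyClosed.pow_dvd_pow_iff two_ne_zero).1 ⟨-2, by linear_combination h⟩
    have : B ^ 2 * (t ^ 2 + 2) = 0 := by linear_combination h
    rw [mul_eq_zero, or_iff_right (pow_ne_zero 2 hB)] at this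
    exact absurd (eq_neg_of_add_eq_zero_left this) (sq_ne_neg_two t)

theorem im_eq_zero_of_sq_sub_three_mul_sq_eq_one {X Y : GaussianInt}
    (h : X ^ 2 - 3 * Y ^ 2 = 1) : X.im = 0 ∧ Y.im = 0 ∧ X.re ^ 2 - 3 * Y.re ^ 2 = 1 := by
  obtain ⟨a, b⟩ := X
  obtain ⟨c, d⟩ := Y
  have hre := congrArg Zsqrtd.re h
  have him := congrArg Zsqrtd.im h
  simp only [pow_two, re_mul, im_mul, re_sub, im_sub, re_one, im_one, re_ofNat, im_ofNat,
    Nat.cast_ofNat] at hre him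
  have hab : a * b = 3 * c * d := by linarith
  -- `Q = b² - 3d²` satisfies `Q (Q + 1) = -3 (ad - bc)² ≤ 0`, so `Q ∈ {0, -1}`.
  have hQ : (b ^ 2 - 3 * d ^ 2) * (b ^ 2 - 3 * d ^ 2 + 1) = -3 * (a * d - b * c) ^ 2 := by
    linear_combination (-(b ^ 2 - 3 * d ^ 2)) * hre + (a * b - 3 * c * d) * hab
  have hQ0 : (b ^ 2 - 3 * d ^ 2) * (b ^ 2 - 3 * d ^ 2 + 1) = 0 := by
    refine le_antisymm (by nlinarith [sq_nonneg (a * d - b * c)]) ?_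
    rcases le_or_gt 0 (b ^ 2 - 3 * d ^ 2) with h' | h' <;> nlinarith
  rcases mul_eq_zero.1 hQ0 with hQ | hQ
  · obtain ⟨rfl, rfl⟩ := divides_sq_eq_zero_z (d := 3) (x := b) (y := d)
      (by push_cast; linear_combination hQ)
    exact ⟨rfl, rfl, by linear_combination hre⟩
  · exfalso
    have h3 := congrArg (Int.cast : ℤ → ZMod 3) hQ
    push_cast at h3
    generalize (b : ZMod 3) = B, (d : ZMod 3) = D at h3
    revert B D
    decide

theorem sq_four_mul_im_le_norm_two_mul_sq_add_one {m : GaussianInt} (hm : m.re ≠ 0) :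
    (4 * m.im) ^ 2 ≤ (2 * m ^ 2 + 1).norm := by
  have hre : 1 ≤ m.re ^ 2 := by
    have := Int.one_le_abs hm
    nlinarith [sq_abs m.re]
  have him : (2 * m ^ 2 + 1).im = m.re * (4 * m.im) := by
    simp only [pow_two, im_add, im_mul, re_ofNat, im_ofNat, im_one, Nat.cast_ofNat]
    ring
  rw [norm_def, him]
  nlinarith [mul_le_mul_of_nonneg_right hre (sq_nonneg (4 * m.im)),
    mul_self_nonneg (2 * m ^ 2 + 1).re]

theorem re_dvd_im_of_im_mul_eq_zero {m x y : GaussianInt} (hy : y.im = 0) (hy0 : y.re ≠ 0)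
    (h : (y * (m - x * y)).im = 0) : y.re ∣ m.im := by
  simp only [im_mul, re_mul, im_sub, re_sub, hy] at h
  refine ⟨x.im, ?_⟩
  have : y.re * (m.im - x.im * y.re) = 0 := by linear_combination h
  rcases mul_eq_zero.1 this with h' | h'
  · exact absurd h' hy0
  · linear_combination h'

theorem im_eq_zero_of_pell_pair {z v w x y : GaussianInt} (hv : v ≠ 0)
    (h₁ : (2 * (2 * v * (2 * (2 * z + 1) ^ 2 + 1) - y)) ^ 2 - 3 * y ^ 2 = 1)
    (h₂ : w ^ 2 - 3 * (y * (2 * z + 1 - x * y)) ^ 2 = 1) : z.im = 0 := by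
  set D := 2 * (2 * z + 1) ^ 2 + 1
  rw [show 2 * (2 * v * D - y) = 4 * (v * D) - 2 * y by ring] at h₁
  generalize hG : v * D = G at h₁
  obtain ⟨hX, hy, hpell⟩ := im_eq_zero_of_sq_sub_three_mul_sq_eq_one h₁
  simp only [re_sub, im_sub, re_mul, im_mul, re_ofNat, im_ofNat, hy, Nat.cast_ofNat] at hX hpell
  have hGim : G.im = 0 := by linarith
  have hGy := sq_le_sq_of_pell_three (g := G.re) (y := y.re) (by linear_combination hpell)
  have hy0 : y.re ≠ 0 := by
    rintro h0
    rw [h0] at hGy hpell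
    nlinarith [sq_nonneg G.re]
  have hDG : D.norm ≤ G.re ^ 2 := by
    have hG' : G.norm = v.norm * D.norm := by rw [← hG, Zsqrtd.norm_mul]
    rw [norm_def, hGim] at hG'
    nlinarith [norm_pos.2 hv, norm_nonneg D]
  have hD := sq_four_mul_im_le_norm_two_mul_sq_add_one (m := 2 * z + 1) (by simp; omega)
  have hdvd := re_dvd_im_of_im_mul_eq_zero hy hy0
    (im_eq_zero_of_sq_sub_three_mul_sq_eq_one h₂).2.1
  simp only [im_add, im_mul, re_ofNat, im_ofNat, im_one, Nat.cast_ofNat, zero_mul, add_zero]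
    at hD hdvd
  by_contra hzi
  have hlt : |2 * z.im| < |y.re| :=
    sq_lt_sq.1 (by nlinarith [pow_pos (abs_pos.2 hzi) 2, sq_abs z.im])
  exact hzi (by linarith [Int.eq_zero_of_abs_lt_dvd ((abs_dvd _ _).2 hdvd) hlt])

end GaussianInt

theorem stmt_7 (z : GaussianInt) :
    z.im = 0 ↔ ∃ v w x y : GaussianInt, v ≠ 0 ∧
      (4*(2*v*(2*(2*z+1)^2+1) - y)^2 - 3*y^2 - 1)^2
        + 2*(w^2 - 1 - 3*y^2*(2*z+1 - x*y)^2)^2 = 0 := by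
  constructor
  · intro hz
    have hz' : z = (z.re : GaussianInt) := Zsqrtd.ext (by simp) (by simp [hz])
    obtain ⟨v, w, x, y, hv, h₁, h₂⟩ := exists_int_pell_pair z.re
    replace h₁ := congrArg (Int.cast : ℤ → GaussianInt) h₁
    replace h₂ := congrArg (Int.cast : ℤ → GaussianInt) h₂
    push_cast at h₁ h₂
    refine ⟨v, w, x, y, by exact_mod_cast hv,
      GaussianInt.sq_add_two_mul_sq_eq_zero_iff.2 ⟨?_, ?_⟩⟩ <;> rw [hz']
    · linear_combination h₁
    · linear_combination h₂
  · rintro ⟨v, w, x, y, hv, h⟩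
    obtain ⟨h₁, h₂⟩ := GaussianInt.sq_add_two_mul_sq_eq_zero_iff.1 h
    exact GaussianInt.im_eq_zero_of_pell_pair (z := z) (w := w) (x := x) (y := y) hv
      (by linear_combination h₁) (by linear_combination h₂)
end

section
/- For every rational integer z there exist rational integers v, w, x, y with v \ne 0 such that 4*(2*v*(2*(2z+1)^2+1) - y)^2 = 3*y^2 + 1 and w^2 = 1 + 3*y^2*(2z+1 - x*y)^2. -/
/-!
Put `c = 2z + 1`, `N = 2c² + 1` and let `(xₙ, yₙ)` be the solutions of `x² - 3y² = 1`,
`xₙ + yₙ√3 = (2 + √3)ⁿ`. The first equation says that `(2y - 4Nv, y)` solves Pell's equation.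
Multiplication by `2 + √3` permutes the finite set `(ℤ/4N)²`, so the orbit of `(1, 0)` is
periodic and some `(x_k, y_k)` with `k > 1` is congruent to `(2, 1)` modulo `4N`; then
`4N ∣ 2y_k - x_k` gives `v`, nonzero because `y_k > 1`.
For the second equation, the binomial expansion of `(x_k + y_k√3)ˢ` gives `y_{ks} = y_k t` with
`t ≡ s x_kˢ⁻¹ ≡ s (mod y_k)` for odd `s`, as `x_k² ≡ 1`. Choosing `s ≡ c (mod y_k)` makes
`c - X y_k = t` for some `X`, and `w = x_{ks}` works.
-/

namespace Pell

variable {a : ℕ} (a1 : 1 < a)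

theorem intCast_xn_succ (n : ℕ) :
    (xn a1 (n + 1) : ℤ) = a * xn a1 n + (a * a - 1) * yn a1 n := by
  have h := xz_succ a1 n
  rw [dz_val] at h
  simp only [xz, yz, az] at h
  linear_combination h

theorem intCast_yn_succ (n : ℕ) : (yn a1 (n + 1) : ℤ) = xn a1 n + a * yn a1 n := by
  rw [yn_succ]; push_cast; ring

theorem intCast_xn_sq (n : ℕ) : (xn a1 n : ℤ) ^ 2 = (a * a - 1) * (yn a1 n : ℤ) ^ 2 + 1 := by
  have h := pell_eqz a1 n
  rw [dz_val] at h
  simp only [xz, yz, az] at h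
  linear_combination h

/-- Multiplication by the fundamental solution `a + √(a² - 1)`, on coordinates `(x, y)`. -/
def stepPerm {R : Type*} [CommRing R] (a : R) : Equiv.Perm (R × R) where
  toFun p := (a * p.1 + (a * a - 1) * p.2, p.1 + a * p.2)
  invFun p := (a * p.1 - (a * a - 1) * p.2, a * p.2 - p.1)
  left_inv p := by ext <;> simp only <;> ring
  right_inv p := by ext <;> simp only <;> ring

theorem natCast_xn_yn_eq_stepPerm_pow {R : Type*} [CommRing R] (n : ℕ) :
    ((xn a1 n : R), (yn a1 n : R)) = (stepPerm (a : R) ^ n) (1, 0) := by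
  induction n with
  | zero => simp
  | succ n ih =>
    rw [pow_succ', Equiv.Perm.mul_apply, ← ih]
    have hx := congrArg (Int.cast : ℤ → R) (intCast_xn_succ a1 n)
    have hy := congrArg (Int.cast : ℤ → R) (intCast_yn_succ a1 n)
    push_cast at hx hy
    rw [hx, hy]
    rfl

theorem exists_natCast_xn_yn_eq_of_finite (R : Type*) [CommRing R] [Finite R] :
    ∃ k, 1 < k ∧ (xn a1 k : R) = a ∧ (yn a1 k : R) = 1 := by
  have hstep : stepPerm (a : R) (1, 0) = ((a : R), 1) := by simp [stepPerm]
  refine ⟨orderOf (stepPerm (a : R)) + 1, by simpa using orderOf_pos (stepPerm (a : R)), ?_⟩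
  have h := natCast_xn_yn_eq_stepPerm_pow a1 (R := R) (orderOf (stepPerm (a : R)) + 1)
  rwa [pow_succ, pow_orderOf_eq_one, one_mul, hstep, Prod.mk.injEq] at h

theorem exists_yn_mul_eq_mul_modEq (k : ℕ) {s : ℕ} (hs : Odd s) :
    ∃ t, yn a1 (k * s) = yn a1 k * t ∧ t ≡ s [MOD yn a1 k] := by
  rcases Nat.eq_zero_or_pos (yn a1 k) with hy | hy
  · obtain rfl : k = 0 := (strictMono_y a1).injective (hy.trans (yn_zero a1).symm)
    exact ⟨s, by simp, rfl⟩
  obtain ⟨t, ht⟩ := y_mul_dvd a1 k s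
  refine ⟨t, ht, ?_⟩
  have hpell := intCast_xn_sq a1 k
  set x := xn a1 k
  set y := yn a1 k
  have hcube : y * t ≡ y * (s * x ^ (s - 1)) [MOD y * y ^ 2] := by
    have := (xy_modEq_yn a1 k s).2
    rw [ht] at this
    convert this using 1 <;> ring
  have hxsq : x ^ 2 ≡ 1 [MOD y] := by
    rw [← Int.natCast_modEq_iff]
    exact (Int.modEq_iff_dvd.mpr ⟨(a * a - 1) * y, by push_cast; linear_combination hpell⟩).symm
  obtain ⟨j, rfl⟩ := hs
  calc t ≡ (2 * j + 1) * x ^ (2 * j + 1 - 1) [MOD y] :=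
        (Nat.ModEq.mul_left_cancel' hy.ne' hcube).of_dvd (dvd_pow_self y two_ne_zero)
    _ = (2 * j + 1) * (x ^ 2) ^ j := by rw [← pow_mul, Nat.add_sub_cancel]
    _ ≡ (2 * j + 1) * 1 ^ j [MOD y] := (hxsq.pow j).mul_left _
    _ = 2 * j + 1 := by rw [one_pow, mul_one]

end Pell

theorem Int.exists_odd_natCast_modEq {c : ℤ} (hc : Odd c) {m : ℕ} (hm : m ≠ 0) :
    ∃ s : ℕ, Odd s ∧ (s : ℤ) ≡ c [ZMOD m] := by
  have hpos : (0 : ℤ) < 2 * m := by positivity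
  refine ⟨(c % (2 * m)).toNat, ?_, ?_⟩
  · rw [← Int.odd_coe_nat, Int.toNat_of_nonneg (Int.emod_nonneg c hpos.ne'), Int.odd_iff,
      Int.emod_emod_of_dvd c (dvd_mul_right 2 _)]
    exact Int.odd_iff.mp hc
  · rw [Int.toNat_of_nonneg (Int.emod_nonneg c hpos.ne')]
    exact Int.emod_emod_of_dvd c (dvd_mul_left _ _)

theorem stmt_9 (z : ℤ) :
    ∃ v w x y : ℤ, v ≠ 0 ∧
      4*(2*v*(2*(2*z+1)^2+1) - y)^2 = 3*y^2 + 1 ∧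
      w^2 = 1 + 3*y^2*(2*z+1 - x*y)^2 := by
  set c := 2 * z + 1
  set N := 2 * c ^ 2 + 1
  have hpell (n : ℕ) : (Pell.xn one_lt_two n : ℤ) ^ 2 = 3 * (Pell.yn one_lt_two n : ℤ) ^ 2 + 1 := by
    simpa using Pell.intCast_xn_sq one_lt_two n
  set M := (4 * N).toNat
  have hM : (M : ℤ) = 4 * N := Int.toNat_of_nonneg (by positivity)
  have hN : 0 < N := by positivity
  have : NeZero M := ⟨by omega⟩
  obtain ⟨k, hk, hxk, hyk⟩ := Pell.exists_natCast_xn_yn_eq_of_finite one_lt_two (ZMod M)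
  have hy1 : (1 : ℤ) < Pell.yn one_lt_two k := by
    exact_mod_cast (Pell.yn_one one_lt_two) ▸ Pell.strictMono_y one_lt_two hk
  obtain ⟨s, hs, hsc⟩ := Int.exists_odd_natCast_modEq ⟨z, rfl⟩ (m := Pell.yn one_lt_two k) (by omega)
  obtain ⟨t, ht, hts⟩ := Pell.exists_yn_mul_eq_mul_modEq one_lt_two k hs
  obtain ⟨X, hX⟩ := ((Int.natCast_modEq_iff.mpr hts).trans hsc).dvd
  have hyt : (Pell.yn one_lt_two (k * s) : ℤ) = Pell.yn one_lt_two k * t := mod_cast ht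
  have hpell_ks := hpell (k * s)
  set y : ℤ := (Pell.yn one_lt_two k : ℤ)
  set x : ℤ := (Pell.xn one_lt_two k : ℤ)
  obtain ⟨v, hv⟩ : 4 * N ∣ 2 * y - x := by
    rw [← hM, ← ZMod.intCast_zmod_eq_zero_iff_dvd]
    push_cast [x, y]
    rw [hxk, hyk]
    norm_num
  have hv0 : v ≠ 0 := by
    rintro rfl
    nlinarith [hpell k]
  refine ⟨v, Pell.xn one_lt_two (k * s), X, y, hv0, ?_, ?_⟩
  · linear_combination hpell k - (4 * N * v - 2 * y - x) * hv
  · linear_combination hpell_ks - 3 * y ^ 2 * (c - X * y + t) * hX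
      + 3 * (Pell.yn one_lt_two (k * s) + y * t) * hyt
end

section
/- Let u_n = u_n(4,1). For all natural numbers n and k, u_{kn} \equiv k * (u_{n+1} - 4*u_n)^{k-1} * u_n (mod u_n^2). -/
/-! Writing `c = u_{n+1} - A u_n`, the addition law `u_{m+n} = u_{m+1} u_n + c u_m` shows that
`u_{mn+1} ≡ c^m (mod u_n)`; feeding this back into the addition law, the term `u_{mn+1} u_n` is
`c^m u_n` modulo `u_n^2`, so each step `k → k + 1` adds one more copy of `c^k u_n`. -/

section

variable (A B : ℤ)

theorem lucasU_add (m n : ℕ) :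
    lucasU A B (m + n) =
      lucasU A B (m + 1) * lucasU A B n + (lucasU A B (n + 1) - A * lucasU A B n) * lucasU A B m := by
  induction m using Nat.twoStepInduction with
  | zero => simp [lucasU]
  | one => simp [lucasU, add_comm 1 n]
  | more m ih ih' =>
    rw [show m + 2 + n = m + n + 2 by omega, lucasU, show m + n + 1 = m + 1 + n by omega, ih', ih]
    simp only [lucasU]
    ring

theorem lucasU_mul_add_one_modEq (m n : ℕ) :
    lucasU A B (m * n + 1) ≡ (lucasU A B (n + 1) - A * lucasU A B n) ^ m [ZMOD lucasU A B n] := by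
  induction m with
  | zero => simp [lucasU, Int.ModEq.refl]
  | succ m ih =>
    have hvanish : lucasU A B (m * n + 1 + 1) * lucasU A B n ≡ 0 [ZMOD lucasU A B n] :=
      Int.modEq_zero_iff_dvd.mpr (dvd_mul_left _ _)
    rw [show (m + 1) * n + 1 = (m * n + 1) + n by ring, lucasU_add, pow_succ']
    simpa only [zero_add] using hvanish.add (ih.mul_left _)

theorem lucasU_mul_modEq (k n : ℕ) :
    lucasU A B (k * n) ≡
      k * (lucasU A B (n + 1) - A * lucasU A B n) ^ (k - 1) * lucasU A B n
      [ZMOD lucasU A B n ^ 2] := by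
  set c := lucasU A B (n + 1) - A * lucasU A B n
  induction k with
  | zero => simp [lucasU, Int.ModEq.refl]
  | succ k ih =>
    have hfirst : lucasU A B (k * n + 1) * lucasU A B n ≡ c ^ k * lucasU A B n
        [ZMOD lucasU A B n ^ 2] := by
      simpa only [sq] using (lucasU_mul_add_one_modEq A B k n).mul_right' (c := lucasU A B n)
    have hexp : c ^ k * lucasU A B n + c * (k * c ^ (k - 1) * lucasU A B n) =
        ((k + 1 : ℕ) : ℤ) * c ^ (k + 1 - 1) * lucasU A B n := by
      cases k with
      | zero => simp
      | succ k => push_cast; ring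
    rw [Nat.succ_mul, lucasU_add, ← hexp]
    exact hfirst.add (ih.mul_left c)

end

theorem stmt_11_general (n k : ℕ) :
    lucasU 4 1 (k*n) ≡
      (k : ℤ) * (lucasU 4 1 (n+1) - 4 * lucasU 4 1 n)^(k-1) * lucasU 4 1 n
      [ZMOD (lucasU 4 1 n)^2] :=
  lucasU_mul_modEq 4 1 k n

theorem stmt_11 (n k : ℕ) (hk : 1 ≤ k) :
    lucasU 4 1 (k*n) ≡
      (k : ℤ) * (lucasU 4 1 (n+1) - 4 * lucasU 4 1 n)^(k-1) * lucasU 4 1 n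
      [ZMOD (lucasU 4 1 n)^2] :=
  stmt_11_general n k
end

section
/- Let y and y_* be Gaussian integers satisfying y_*^2 - 4*y_*y + y^2 = 1 and suppose |y_*| \ge 8 (as a complex absolute value). Then y and y_* are rational integers with |y| > |y_*|/4. -/
/-!
With `u = y⋆ - 2y` and `v = y` the equation reads `u² - 3v² = 1` in `ℤ[i]`. Multiplying
`u + v√3` by the unit `2 - s√3` (`s = ±1`) preserves this equation, and `u, v` are real as
soon as the new pair is (the step is invertible with integer coefficients). When `N v ≥ 3` the
solution satisfies `N u + 3 N v < 4 |Re (u v̄)|`, so one of the two signs strictly decreases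
`N u + N v`; this descent ends at `N v ≤ 2`, where `3 ∣ Im u` (reduce mod 3) forces `u, v` real.
For real solutions `(p - 2q)² = 3q² + 1 < (2q)²` as soon as `|q| > 1`, which gives `|p| < 4|q|`.
-/

-- multiplication of `u + v√3` by the unit `2 - s√3`
theorem sq_sub_three_mul_sq_step {R : Type*} [CommRing R] {u v s : R} (hs : s ^ 2 = 1)
    (h : u ^ 2 - 3 * v ^ 2 = 1) : (2 * u - 3 * s * v) ^ 2 - 3 * (2 * v - s * u) ^ 2 = 1 := by
  linear_combination h + (9 * v ^ 2 - 3 * u ^ 2) * hs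

namespace GaussianInt

variable {u v : GaussianInt}

theorem norm_eq_sq_add_sq (x : GaussianInt) : x.norm = x.re ^ 2 + x.im ^ 2 := by
  rw [Zsqrtd.norm_def]; ring

theorem re_im_of_sq_sub_three_mul_sq_eq_one (h : u ^ 2 - 3 * v ^ 2 = 1) :
    u.re ^ 2 - u.im ^ 2 - 3 * (v.re ^ 2 - v.im ^ 2) = 1 ∧ u.re * u.im = 3 * (v.re * v.im) := by
  have hre := congrArg Zsqrtd.re h
  have him := congrArg Zsqrtd.im h
  simp only [sq, Zsqrtd.re_sub, Zsqrtd.im_sub, Zsqrtd.re_mul, Zsqrtd.im_mul, Zsqrtd.re_ofNat,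
    Zsqrtd.im_ofNat, Zsqrtd.re_one, Zsqrtd.im_one, Nat.cast_ofNat] at hre him
  constructor
  · linear_combination hre
  · linarith

theorem three_dvd_im_of_sq_sub_three_mul_sq_eq_one (h : u ^ 2 - 3 * v ^ 2 = 1) : 3 ∣ u.im := by
  have hmod := congrArg (Int.cast : ℤ → ZMod 3) (re_im_of_sq_sub_three_mul_sq_eq_one h).1
  push_cast at hmod
  rw [(by decide : (3 : ZMod 3) = 0), zero_mul, sub_zero] at hmod
  refine (ZMod.intCast_zmod_eq_zero_iff_dvd u.im 3).mp ?_
  generalize (u.re : ZMod 3) = x at hmod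
  generalize (u.im : ZMod 3) = y at hmod ⊢
  revert x y; decide

theorem im_eq_zero_of_norm_le_two (h : u ^ 2 - 3 * v ^ 2 = 1) (hv : v.norm ≤ 2) :
    u.im = 0 ∧ v.im = 0 := by
  obtain ⟨hre, him⟩ := re_im_of_sq_sub_three_mul_sq_eq_one h
  obtain ⟨k, hk⟩ := three_dvd_im_of_sq_sub_three_mul_sq_eq_one h
  rw [norm_eq_sq_add_sq] at hv
  have hk0 : k = 0 := by
    by_contra hk0
    have hk1 : 1 ≤ k ^ 2 := by nlinarith [Int.one_le_abs hk0, sq_abs k]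
    have hcd : (u.re * k) ^ 2 ≤ 1 := by
      rw [show u.re * k = v.re * v.im by rw [hk] at him; linarith]
      nlinarith [sq_nonneg (v.re ^ 2 - v.im ^ 2)]
    rw [hk] at hre
    nlinarith [mul_le_mul_of_nonneg_left hk1 (sq_nonneg u.re)]
  have hu : u.im = 0 := by rw [hk, hk0, mul_zero]
  refine ⟨hu, ?_⟩
  rcases mul_eq_zero.mp (show v.re * v.im = 0 by rw [hu] at him; linarith) with hc | hd
  · rw [hc, hu] at hre
    have : v.im ^ 2 = 0 := by nlinarith [sq_nonneg u.re, sq_nonneg v.im]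
    exact pow_eq_zero_iff two_ne_zero |>.mp this
  · exact hd

theorem norm_add_norm_step {s : ℤ} (hs : s ^ 2 = 1) :
    (2 * u - 3 * s * v).norm + (2 * v - s * u).norm =
      5 * u.norm + 13 * v.norm - 16 * s * (u.re * v.re + u.im * v.im) := by
  simp only [norm_eq_sq_add_sq, Zsqrtd.re_sub, Zsqrtd.im_sub, Zsqrtd.re_mul, Zsqrtd.im_mul,
    Zsqrtd.re_ofNat, Zsqrtd.im_ofNat, Zsqrtd.re_intCast, Zsqrtd.im_intCast]
  linear_combination (9 * v.re ^ 2 + 9 * v.im ^ 2 + u.re ^ 2 + u.im ^ 2) * hs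

theorem norm_le_three_mul_norm_add_one (h : u ^ 2 - 3 * v ^ 2 = 1) :
    u.norm ≤ 3 * v.norm + 1 := by
  obtain ⟨hre, him⟩ := re_im_of_sq_sub_three_mul_sq_eq_one h
  rw [norm_eq_sq_add_sq, norm_eq_sq_add_sq]
  refine abs_le_of_sq_le_sq' ?_ (by positivity) |>.2
  -- `N u = |u²| = |1 + 3v²|`
  have : (u.re ^ 2 + u.im ^ 2) ^ 2 =
      (1 + 3 * (v.re ^ 2 - v.im ^ 2)) ^ 2 + 36 * (v.re * v.im) ^ 2 := by
    linear_combination (u.re ^ 2 - u.im ^ 2 + 1 + 3 * (v.re ^ 2 - v.im ^ 2)) * hre +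
      (4 * u.re * u.im + 12 * (v.re * v.im)) * him
  nlinarith [sq_nonneg v.re, sq_nonneg v.im]

theorem three_mul_norm_sq_sub_norm_le (h : u ^ 2 - 3 * v ^ 2 = 1) :
    3 * v.norm ^ 2 - v.norm ≤ (u.re * v.re + u.im * v.im) ^ 2 := by
  obtain ⟨hre, him⟩ := re_im_of_sq_sub_three_mul_sq_eq_one h
  rw [norm_eq_sq_add_sq]
  -- `Re ((u v̄)²) = Re (v̄² u²) = Re (v̄²) + 3 N(v)²`
  have : (u.re * v.re + u.im * v.im) ^ 2 - (u.im * v.re - u.re * v.im) ^ 2 =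
      (v.re ^ 2 - v.im ^ 2) + 3 * (v.re ^ 2 + v.im ^ 2) ^ 2 := by
    linear_combination (v.re ^ 2 - v.im ^ 2) * hre + 4 * (v.re * v.im) * him
  nlinarith [sq_nonneg (u.im * v.re - u.re * v.im), sq_nonneg v.re]

theorem norm_add_three_mul_norm_lt (h : u ^ 2 - 3 * v ^ 2 = 1) (hv : 3 ≤ v.norm) :
    u.norm + 3 * v.norm < 4 * |u.re * v.re + u.im * v.im| := by
  have hu := norm_le_three_mul_norm_add_one h
  have hR := three_mul_norm_sq_sub_norm_le h
  have hsq : (u.norm + 3 * v.norm) ^ 2 < (4 * (u.re * v.re + u.im * v.im)) ^ 2 := by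
    nlinarith [norm_nonneg u]
  have := sq_lt_sq.mp hsq
  rwa [abs_of_nonneg (by linarith [norm_nonneg u]), abs_mul, abs_of_pos four_pos] at this

theorem exists_step_norm_lt (h : u ^ 2 - 3 * v ^ 2 = 1) (hv : 3 ≤ v.norm) :
    ∃ s : ℤ, s ^ 2 = 1 ∧
      (2 * u - 3 * s * v).norm + (2 * v - s * u).norm < u.norm + v.norm := by
  have hlt := norm_add_three_mul_norm_lt h hv
  rcases abs_cases (u.re * v.re + u.im * v.im) with ⟨hR, -⟩ | ⟨hR, -⟩
  · exact ⟨1, one_pow 2, by rw [norm_add_norm_step (one_pow 2)]; linarith⟩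
  · refine ⟨-1, by norm_num, ?_⟩
    rw [norm_add_norm_step (by norm_num)]
    linarith

theorem im_eq_zero_of_sq_sub_three_mul_sq_eq_one_s16 (h : u ^ 2 - 3 * v ^ 2 = 1) :
    u.im = 0 ∧ v.im = 0 := by
  induction hN : (u.norm + v.norm).toNat using Nat.strong_induction_on generalizing u v with
  | _ N ih =>
  rcases le_or_gt v.norm 2 with hv | hv
  · exact im_eq_zero_of_norm_le_two h hv
  obtain ⟨s, hs, hlt⟩ := exists_step_norm_lt h hv
  have hstep := sq_sub_three_mul_sq_step (s := (s : GaussianInt)) (by exact_mod_cast hs) h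
  have hdesc : ((2 * u - 3 * (s : GaussianInt) * v).norm + (2 * v - s * u).norm).toNat < N := by
    have := norm_nonneg (2 * u - 3 * (s : GaussianInt) * v)
    have := norm_nonneg (2 * v - (s : GaussianInt) * u)
    omega
  obtain ⟨hu', hv'⟩ := ih _ hdesc hstep rfl
  simp only [Zsqrtd.im_sub, Zsqrtd.im_mul, Zsqrtd.re_mul, Zsqrtd.re_ofNat, Zsqrtd.im_ofNat,
    Zsqrtd.re_intCast, Zsqrtd.im_intCast, Nat.cast_ofNat] at hu' hv'
  have hvim : v.im = 0 := by linear_combination s * hu' + 2 * hv' + 3 * v.im * hs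
  refine ⟨?_, hvim⟩
  linear_combination (-s) * hv' - u.im * hs + 2 * s * hvim

theorem norm_toComplex_of_im_eq_zero {x : GaussianInt} (hx : x.im = 0) :
    ‖(x : ℂ)‖ = |(x.re : ℝ)| := by
  rw [toComplex_def, hx]
  simp

end GaussianInt

theorem abs_lt_four_mul_abs {R : Type*} [CommRing R] [LinearOrder R] [IsStrictOrderedRing R]
    {p q : R} (h : p ^ 2 - 4 * p * q + q ^ 2 = 1) (hp : 4 < |p|) : |p| < 4 * |q| := by
  have hpq : (p - 2 * q) ^ 2 = 3 * q ^ 2 + 1 := by linear_combination h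
  have htri : |p| ≤ |p - 2 * q| + 2 * |q| := by
    calc |p| = |(p - 2 * q) + 2 * q| := by ring_nf
      _ ≤ |p - 2 * q| + |2 * q| := abs_add_le _ _
      _ = |p - 2 * q| + 2 * |q| := by rw [abs_mul, abs_two]
  have hq : 1 < |q| := by
    by_contra! hq
    have : |p - 2 * q| ≤ 2 :=
      abs_le_of_sq_le_sq (by nlinarith [sq_abs q, abs_nonneg q]) zero_le_two
    linarith
  have : |p - 2 * q| < 2 * |q| := abs_lt_of_sq_lt_sq (by nlinarith [sq_abs q]) (by positivity)
  linarith

theorem stmt_16 (y ystar : GaussianInt)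
    (h : ystar^2 - 4*ystar*y + y^2 = 1)
    (habs : 8 ≤ ‖ystar.toComplex‖) :
    y.im = 0 ∧ ystar.im = 0 ∧
      ‖y.toComplex‖ > ‖ystar.toComplex‖ / 4 := by
  have hpell : (ystar - 2 * y) ^ 2 - 3 * y ^ 2 = 1 := by linear_combination h
  obtain ⟨hu, hy⟩ := GaussianInt.im_eq_zero_of_sq_sub_three_mul_sq_eq_one_s16 hpell
  have hystar : ystar.im = 0 := by
    simpa [Zsqrtd.im_sub, Zsqrtd.im_mul, hy] using hu
  have hre : (ystar.re : ℝ) ^ 2 - 4 * ystar.re * y.re + (y.re : ℝ) ^ 2 = 1 := by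
    have := congrArg Zsqrtd.re h
    simp only [sq, Zsqrtd.re_add, Zsqrtd.re_sub, Zsqrtd.re_mul, Zsqrtd.re_ofNat, Zsqrtd.im_ofNat,
      Zsqrtd.re_one, hy, hystar, Nat.cast_ofNat] at this
    norm_cast
    linear_combination this
  rw [GaussianInt.norm_toComplex_of_im_eq_zero hy]
  rw [GaussianInt.norm_toComplex_of_im_eq_zero hystar] at habs ⊢
  have := abs_lt_four_mul_abs hre (by linarith)
  exact ⟨hy, hystar, by linarith⟩
end

section
/- A Gaussian integer z is a rational integer if and only if there exist Gaussian integers s, t, w, x, y such that, setting v = (2s+1)(3t+1), the equation (4*(2*v*(2*(2z+1)^2+1) - y)^2 - 3*y^2 - 1)^2 + 2*(w^2 - 1 - 3*y^2*(2z+1 - x*y)^2)^2 = 0 holds. -/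
/-!
Taking real and imaginary parts, `a² + 2b² = 0` forces `a = b = 0` in `ℤ[i]` (as
`√-2 ∉ ℚ(i)`), and every solution of `X² - 3Y² = 1` in `ℤ[i]` lies in `ℤ`. With `ξ = 2z + 1`
and `U = 2ξ² + 1`, the equation therefore says that `E = 2(2vU - y)` and `y` are integers with
`E² - 3y² = 1`, and that `y(ξ - xy)` is an integer. The Pell equation bounds the integer `vU`
by `|vU| ≤ |y|`, while if `Im z ≠ 0` the second condition gives `|y| ≤ |Im ξ| < |U| ≤ |vU|`.

Conversely, for `z ∈ ℤ`, a solution of `a² - 3(4Ub)² = 1` with `b ≠ 0`, multiplied by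
`2 - √3`, is a Pell solution `E + y√3` with `E + 2y = 4Ub`; every nonzero integer `b` has the
form `(2s + 1)(3t + 1)`; and `(E + y√3)^ξ` is a Pell solution whose `√3`-coordinate is
`≡ ξy mod y²`.
-/

open Zsqrtd

theorem eq_zero_of_sq_eq_mul_sq {d a b : ℤ} (hd : ¬IsSquare d) (h : a ^ 2 = d * b ^ 2) :
    b = 0 := by
  by_contra hb
  refine hd (Rat.isSquare_intCast_iff.mp ⟨a / b, ?_⟩)
  field_simp
  exact_mod_cast h.symm

theorem three_mul_sq_sub_sq_ne_one (b d : ℤ) : 3 * d ^ 2 - b ^ 2 ≠ 1 := by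
  intro h
  have h3 := congrArg (Int.cast : ℤ → ZMod 3) h
  push_cast at h3
  revert h3
  generalize (b : ZMod 3) = B
  generalize (d : ZMod 3) = D
  revert B D
  decide

theorem ne_zero_and_sq_le_sq_of_pell_three {E y c : ℤ} (h : E ^ 2 - 3 * y ^ 2 = 1)
    (hE : E = 4 * c - 2 * y) : y ≠ 0 ∧ c ^ 2 ≤ y ^ 2 := by
  subst hE
  have hy : y ≠ 0 := by
    rintro rfl
    have : 16 * c ^ 2 = 1 := by linarith
    omega
  have : 0 < y ^ 2 := by positivity
  exact ⟨hy, by nlinarith [sq_nonneg (c - y)]⟩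

theorem exists_pell_three_add_two_mul_eq_mul {M : ℤ} (hM : M ≠ 0) :
    ∃ E y v : ℤ, E ^ 2 - 3 * y ^ 2 = 1 ∧ v ≠ 0 ∧ E + 2 * y = M * v := by
  have hd : ¬IsSquare (3 * M ^ 2) := by
    rintro ⟨r, hr⟩
    exact hM (eq_zero_of_sq_eq_mul_sq (d := 3) (by norm_num) (by rw [sq r, ← hr]))
  obtain ⟨a, b, hab, hb⟩ := Pell.exists_of_not_isSquare (by positivity) hd
  exact ⟨2 * a - 3 * (M * b), 2 * (M * b) - a, b, by linear_combination hab, hb, by ring⟩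

namespace Pell.Solution₁

theorem exists_y_zpow_eq_of_odd {d : ℤ} (a : Solution₁ d) {j : ℤ} (hj : Odd j) :
    ∃ B, (a ^ j).y = j * a.y + a.y ^ 2 * B := by
  obtain ⟨k, rfl⟩ := hj
  suffices ∃ A B, (a ^ (2 * k + 1)).x = a.x + a.y * A ∧
      (a ^ (2 * k + 1)).y = (2 * k + 1) * a.y + a.y ^ 2 * B by
    obtain ⟨-, B, -, hB⟩ := this
    exact ⟨B, hB⟩
  -- Each step multiplies by `a ^ (± 2) = (1 + 2 d a.y², ± 2 a.x a.y)`.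
  have hx := a.prop_x
  induction k using Int.induction_on with
  | zero => exact ⟨0, 0, by simp, by simp⟩
  | succ k ih =>
    obtain ⟨A, B, hA, hB⟩ := ih
    rw [show 2 * ((k : ℤ) + 1) + 1 = 2 * k + 1 + 1 + 1 by ring, zpow_add_one, zpow_add_one]
    simp only [x_mul, y_mul, hA, hB]
    refine ⟨2 * d * a.x * a.y + A * (1 + 2 * d * a.y ^ 2) + 2 * d * a.x * a.y * (2 * k + 1)
      + 2 * d * a.x * a.y ^ 2 * B,
      2 * d * a.y + 2 * a.x * A + 2 * d * a.y * (2 * k + 1) + B * (1 + 2 * d * a.y ^ 2), ?_, ?_⟩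
    · linear_combination (a.x + a.y * A) * hx
    · linear_combination ((2 * k + 1) * a.y + a.y ^ 2 * B + 2 * a.y) * hx
  | pred k ih =>
    obtain ⟨A, B, hA, hB⟩ := ih
    rw [show 2 * (-(k : ℤ) - 1) + 1 = 2 * -k + 1 - 1 - 1 by ring, zpow_sub_one, zpow_sub_one]
    simp only [x_mul, y_mul, x_inv, y_inv, hA, hB]
    refine ⟨2 * d * a.x * a.y + A * (1 + 2 * d * a.y ^ 2) - 2 * d * a.x * a.y * (2 * -k + 1)
      - 2 * d * a.x * a.y ^ 2 * B,
      -2 * d * a.y - 2 * a.x * A + 2 * d * a.y * (2 * -k + 1) + B * (1 + 2 * d * a.y ^ 2), ?_, ?_⟩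
    · linear_combination (a.x + a.y * A) * hx
    · linear_combination ((2 * -k + 1) * a.y + a.y ^ 2 * B - 2 * a.y) * hx

end Pell.Solution₁

theorem exists_two_pow_mul_eq_odd_mul_three_mul_add_one (k : ℕ) {u : ℤ} (hu : Odd u) :
    ∃ s t : ℤ, 2 ^ k * u = (2 * s + 1) * (3 * t + 1) := by
  induction k with
  | zero =>
    obtain ⟨s, rfl⟩ := hu
    exact ⟨s, 0, by ring⟩
  | succ k ih =>
    obtain ⟨s, t, h⟩ := ih
    exact ⟨-s - 1, -2 * t - 1, by rw [pow_succ, mul_right_comm, h]; ring⟩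

theorem exists_eq_odd_mul_three_mul_add_one {v : ℤ} (hv : v ≠ 0) :
    ∃ s t : ℤ, v = (2 * s + 1) * (3 * t + 1) := by
  obtain ⟨k, m, hm, hkm⟩ := Nat.exists_eq_two_pow_mul_odd (Int.natAbs_ne_zero.mpr hv)
  have hodd : Odd (m : ℤ) := by exact_mod_cast hm
  rcases Int.natAbs_eq v with h | h <;> rw [h, hkm]
  · exact_mod_cast exists_two_pow_mul_eq_odd_mul_three_mul_add_one k hodd
  · push_cast
    rw [← mul_neg]
    exact exists_two_pow_mul_eq_odd_mul_three_mul_add_one k hodd.neg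

theorem exists_int_solution (n : ℤ) : ∃ s t w x y : ℤ,
    4 * (2 * ((2 * s + 1) * (3 * t + 1)) * (2 * (2 * n + 1) ^ 2 + 1) - y) ^ 2 - 3 * y ^ 2 - 1
      = 0 ∧
    w ^ 2 - 1 - 3 * y ^ 2 * (2 * n + 1 - x * y) ^ 2 = 0 := by
  set U := 2 * (2 * n + 1) ^ 2 + 1
  obtain ⟨E, y, v, hEy, hv, hE⟩ :=
    exists_pell_three_add_two_mul_eq_mul (M := 4 * U) (by positivity)
  obtain ⟨s, t, rfl⟩ := exists_eq_odd_mul_three_mul_add_one hv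
  set a : Pell.Solution₁ 3 := .mk E y hEy
  obtain ⟨B, hB⟩ := a.exists_y_zpow_eq_of_odd (odd_two_mul_add_one n)
  rw [show a.y = y from Pell.Solution₁.y_mk ..] at hB
  refine ⟨s, t, (a ^ (2 * n + 1)).x, -B, y, ?_, ?_⟩
  · linear_combination hEy - (4 * U * ((2 * s + 1) * (3 * t + 1)) - 2 * y + E) * hE
  · linear_combination
      (a ^ (2 * n + 1)).prop + 3 * ((a ^ (2 * n + 1)).y + y * (2 * n + 1 + B * y)) * hB

namespace GaussianInt

theorem eq_intCast_re {x : GaussianInt} (h : x.im = 0) : x = (x.re : GaussianInt) :=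
  Zsqrtd.ext (re_intCast _).symm (by rw [h, im_intCast])

theorem eq_zero_of_sq_eq_neg_two_mul_sq {c : GaussianInt} {n : ℤ}
    (h : c ^ 2 = -2 * (n : GaussianInt) ^ 2) : n = 0 := by
  have hre := congrArg re h
  have him := congrArg im h
  simp only [sq, re_mul, im_mul, re_intCast, im_intCast, re_neg, im_neg, re_ofNat, im_ofNat,
    Nat.cast_ofNat] at hre him
  rcases mul_eq_zero.mp (show c.re * c.im = 0 by linarith) with h0 | h0 <;> rw [h0] at hre
  · exact eq_zero_of_sq_eq_mul_sq (d := 2) (a := c.im) (by norm_num) (by linarith)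
  · nlinarith

theorem eq_zero_of_sq_add_two_mul_sq {a b : GaussianInt} (h : a ^ 2 + 2 * b ^ 2 = 0) :
    a = 0 ∧ b = 0 := by
  have hb : b = 0 := norm_eq_zero.mp <| eq_zero_of_sq_eq_neg_two_mul_sq (c := a * star b) <| by
    rw [norm_eq_mul_conj]
    linear_combination (star b) ^ 2 * h
  subst hb
  exact ⟨pow_eq_zero_iff two_ne_zero |>.mp (by simpa using h), rfl⟩

theorem im_eq_zero_of_pell_three {X Y : GaussianInt} (h : X ^ 2 - 3 * Y ^ 2 = 1) :
    X.im = 0 ∧ Y.im = 0 := by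
  obtain ⟨a, b⟩ := X
  obtain ⟨c, d⟩ := Y
  have hre := congrArg re h
  have him := congrArg im h
  simp only [sq, re_mul, im_mul, re_sub, im_sub, re_ofNat, im_ofNat, re_one, im_one,
    Nat.cast_ofNat] at hre him
  have hcross : a * d = b * c := by
    -- `1 = N(X² - 3Y²)`, regrouped
    have : (a ^ 2 + b ^ 2 - 3 * c ^ 2 - 3 * d ^ 2) ^ 2 + 12 * (a * d - b * c) ^ 2 = 1 := by
      linear_combination
        (a ^ 2 - b ^ 2 - 3 * c ^ 2 + 3 * d ^ 2 + 1) * hre + (2 * a * b - 6 * c * d) * him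
    nlinarith [sq_nonneg (a ^ 2 + b ^ 2 - 3 * c ^ 2 - 3 * d ^ 2), sq_nonneg (a * d - b * c)]
  have hab : a * b = 3 * c * d := by linarith
  have ha : a * (b ^ 2 - 3 * d ^ 2) = 0 := by linear_combination b * hab - 3 * d * hcross
  have hc : c * (b ^ 2 - 3 * d ^ 2) = 0 := by linear_combination d * hab - b * hcross
  by_cases hbd : b ^ 2 = 3 * d ^ 2
  · obtain rfl : d = 0 := eq_zero_of_sq_eq_mul_sq (by norm_num) hbd
    exact ⟨pow_eq_zero_iff two_ne_zero |>.mp (by simpa using hbd), rfl⟩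
  · have hbd' : b ^ 2 - 3 * d ^ 2 ≠ 0 := sub_ne_zero.mpr hbd
    obtain rfl : a = 0 := (mul_eq_zero.mp ha).resolve_right hbd'
    obtain rfl : c = 0 := (mul_eq_zero.mp hc).resolve_right hbd'
    exact absurd (by linarith) (three_mul_sq_sub_sq_ne_one b d)

theorem sq_im_lt_norm_two_mul_sq_add_one {ξ : GaussianInt} (h : ξ.re ≠ 0) :
    ξ.im ^ 2 < (2 * ξ ^ 2 + 1).norm := by
  have : 0 < ξ.re ^ 2 := by positivity
  simp only [norm_def, sq, re_mul, im_mul, re_add, im_add, re_ofNat, im_ofNat, re_one, im_one,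
    Nat.cast_ofNat]
  nlinarith [sq_nonneg ξ.im, sq_nonneg (2 * (ξ.re * ξ.re - ξ.im * ξ.im) + 1)]

theorem im_eq_zero_of_solution {z v w x y : GaussianInt} (hv : v ≠ 0)
    (hA : 4 * (2 * v * (2 * (2 * z + 1) ^ 2 + 1) - y) ^ 2 - 3 * y ^ 2 - 1 = 0)
    (hB : w ^ 2 - 1 - 3 * y ^ 2 * (2 * z + 1 - x * y) ^ 2 = 0) : z.im = 0 := by
  set U := 2 * (2 * z + 1) ^ 2 + 1
  have hE : (4 * (v * U) - 2 * y) ^ 2 - 3 * y ^ 2 = 1 := by linear_combination hA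
  have hK : w ^ 2 - 3 * (y * (2 * z + 1 - x * y)) ^ 2 = 1 := by linear_combination hB
  obtain ⟨hEim, hyim⟩ := im_eq_zero_of_pell_three hE
  obtain ⟨-, hKim⟩ := im_eq_zero_of_pell_three hK
  have hvU : (v * U).im = 0 := by
    simp only [im_sub, im_mul, re_ofNat, im_ofNat, hyim, Nat.cast_ofNat] at hEim
    rw [im_mul]
    linarith
  rw [eq_intCast_re hyim] at hE hKim
  rw [eq_intCast_re hvU] at hE
  obtain ⟨hy0, hcy⟩ :=
    ne_zero_and_sq_le_sq_of_pell_three (c := (v * U).re) (by exact_mod_cast hE) rfl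
  have hzx : 2 * z.im = x.im * y.re := by
    simp only [im_mul, im_sub, re_intCast, im_intCast, im_add, im_ofNat, re_ofNat, im_one,
      Nat.cast_ofNat] at hKim
    have := (mul_eq_zero.mp (by linarith : y.re * (2 * z.im - x.im * y.re) = 0)).resolve_left hy0
    linarith
  by_contra hz
  have hyz : y.re ^ 2 ≤ (2 * z.im) ^ 2 := by
    have hx : x.im ≠ 0 := by rintro h0; rw [h0] at hzx; omega
    have : 0 < x.im ^ 2 := by positivity
    rw [hzx]
    nlinarith
  have hUz : (2 * z.im) ^ 2 < U.norm := by
    have hξ : (2 * z + 1).re ≠ 0 := by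
      simp only [re_add, re_mul, re_ofNat, im_ofNat, re_one, Nat.cast_ofNat]
      omega
    simpa using sq_im_lt_norm_two_mul_sq_add_one hξ
  have hnorm : (v * U).re ^ 2 = v.norm * U.norm := by
    rw [← Zsqrtd.norm_mul, congrArg Zsqrtd.norm (eq_intCast_re hvU), norm_intCast, sq]
  have : 0 < v.norm := norm_pos.mpr hv
  nlinarith

end GaussianInt

theorem stmt_18 (z : GaussianInt) :
    z.im = 0 ↔ ∃ s t w x y : GaussianInt,
      (4*(2*((2*s+1)*(3*t+1))*(2*(2*z+1)^2+1) - y)^2 - 3*y^2 - 1)^2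
        + 2*(w^2 - 1 - 3*y^2*(2*z+1 - x*y)^2)^2 = 0 := by
  constructor
  · intro hz
    obtain ⟨s, t, w, x, y, hA, hB⟩ := exists_int_solution z.re
    refine ⟨s, t, w, x, y, ?_⟩
    rw [GaussianInt.eq_intCast_re hz]
    norm_cast
    rw [hA, hB]
    norm_num
  · rintro ⟨s, t, w, x, y, h⟩
    obtain ⟨hA, hB⟩ := GaussianInt.eq_zero_of_sq_add_two_mul_sq h
    refine GaussianInt.im_eq_zero_of_solution (mul_ne_zero ?_ ?_) hA hB <;>
    · intro h
      have := congrArg Zsqrtd.re h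
      simp only [re_add, re_mul, re_ofNat, im_ofNat, re_one, re_zero, Nat.cast_ofNat] at this
      omega
end
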